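/- arXiv:1901.01859 — 3 statements merged into one kernel-verified Lean document; each statement's English description precedes it below -/
import Mathlib

section
/- Let G be a nilpotent group generated by a commutator-closed subset X, and suppose X is contained in the union of finitely many subgroups G₁, G₂, …, G_m of G. Then G equals the product set G₁G₂⋯G_m, i.e. every element of G can be written as g₁g₂⋯g_m with gᵢ ∈ Gᵢ. -/
open scoped commutatorElement

/-- The iterated (Engel) commutator: `engel y x 0 = y`, `engel y x (i+1) = ⁅engel y x i, x⁆`. -/
def engel {G : Type*} [Group G] (y x : G) : ℕ → G
  | 0 => y
  | i + 1 => ⁅engel y x i, x⁆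

/-- An element `x` of a group `G` is (left) `n`-Engel if `[y,ₙ x] = 1` for all `y ∈ G`. -/
def IsNEngel {G : Type*} [Group G] (n : ℕ) (x : G) : Prop :=
  ∀ y : G, engel y x n = 1

/-- Multilinear commutator words, indexed by their weight (number of variables). -/
inductive MCWord : ℕ → Type
  | var : MCWord 1
  | comm {a b : ℕ} : MCWord a → MCWord b → MCWord (a + b)

/-- Evaluation of a multilinear commutator word at a tuple of group elements. -/
def MCWord.eval {G : Type*} [Group G] : {k : ℕ} → MCWord k → (Fin k → G) → G
  | _, .var, f => f 0
  | _, .comm u v, f =>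
      ⁅MCWord.eval u (fun i => f (Fin.castAdd _ i)),
       MCWord.eval v (fun i => f (Fin.natAdd _ i))⁆

/-- The set of `w`-values in `G`. -/
def wValues {G : Type*} [Group G] {k : ℕ} (w : MCWord k) : Set G :=
  {g : G | ∃ f : Fin k → G, w.eval f = g}

/-- `IsDeltaValue k g` means `g` is a `δ_k`-value, i.e. of the form
`δ_k(g₁,…,g_{2^k})`: every element is a `δ₀`-value, and the `δ_{k+1}`-values are
the commutators of two `δ_k`-values. -/
def IsDeltaValue {G : Type*} [Group G] : ℕ → G → Prop
  | 0, _ => True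
  | k + 1, g => ∃ a b : G, IsDeltaValue k a ∧ IsDeltaValue k b ∧ g = ⁅a, b⁆

/-!
Induct on the length of the lower central series `γ`. Since `X` is commutator-closed and generates
`G`, and commutation is bimultiplicative modulo `γ (k + 2)`, the subgroup `γ k` is generated by
`X ∩ γ k` modulo `γ (k + 1)`. So if `γ (n + 1) = 1`, the central subgroup `N = γ n` is generated
by elements of `X ∩ Z(G)`, each lying in some `Gᵢ ∩ Z(G)`, and `N ⊆ (G₁ ∩ Z(G)) ⋯ (Gₘ ∩ Z(G))`.
By induction every `g` is `g₁ ⋯ gₘ z` with `gᵢ ∈ Gᵢ` and `z ∈ N`; writing `z = z₁ ⋯ zₘ` with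
`zᵢ ∈ Gᵢ` central gives `g = (g₁ z₁) ⋯ (gₘ zₘ)`.
-/

open Subgroup

namespace Subgroup

variable {G : Type*} [Group G]

theorem commutator_closure_le_of_normal {S T : Set G} {H : Subgroup G} [hH : H.Normal]
    (h : ∀ s ∈ S, ∀ t ∈ T, ⁅s, t⁆ ∈ H) : ⁅closure S, closure T⁆ ≤ H := by
  have hS : ∀ s ∈ S, ∀ b ∈ closure T, ⁅s, b⁆ ∈ H := fun s hs b hb => by
    induction hb using closure_induction with
    | mem t ht => exact h s hs t ht
    | one => simp
    | mul b₁ b₂ _ _ h₁ h₂ =>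
      rw [commutatorElement_mul_right_eq_mul_conj]
      simpa only [mul_assoc] using mul_mem h₁ (hH.conj_mem _ h₂ b₁)
    | inv b _ hb =>
      rw [commutatorElement_inv_right, ← commutatorElement_inv]
      simpa using hH.conj_mem _ (inv_mem hb) b⁻¹
  rw [commutator_le]
  intro a ha b hb
  induction ha using closure_induction with
  | mem s hs => exact hS s hs b hb
  | one => simp
  | mul a₁ a₂ _ _ h₁ h₂ =>
    rw [commutatorElement_mul_left_eq_conj_mul]
    exact mul_mem (hH.conj_mem _ h₂ a₁) h₁
  | inv a _ ha =>
    rw [commutatorElement_inv_left, ← commutatorElement_inv]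
    simpa using hH.conj_mem _ (inv_mem ha) a⁻¹

theorem lowerCentralSeries_le_closure_inter_sup {X : Set G}
    (hX : ∀ x ∈ X, ∀ y ∈ X, ⁅x, y⁆ ∈ X) (hgen : closure X = ⊤) (k : ℕ) :
    lowerCentralSeries ⊤ k ≤ closure (X ∩ ((⊤ : Subgroup G).lowerCentralSeries k : Set G)) ⊔
      lowerCentralSeries ⊤ (k + 1) := by
  induction k with
  | zero => simp [hgen]
  | succ k ih =>
    set γ := lowerCentralSeries (⊤ : Subgroup G)
    have : (closure (X ∩ (γ (k + 1) : Set G)) ⊔ γ (k + 2)).Normal := by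
      rw [← commutator_top_right_le_iff]
      calc ⁅closure (X ∩ (γ (k + 1) : Set G)) ⊔ γ (k + 2), ⊤⁆ ≤ ⁅γ (k + 1), ⊤⁆ :=
            commutator_mono (sup_le (closure_le _ |>.2 Set.inter_subset_right)
              (lowerCentralSeries_antitone _ (by omega))) le_rfl
        _ ≤ _ := le_sup_right
    calc γ (k + 1) = ⁅γ k, closure X⁆ := by rw [hgen]; rfl
      _ ≤ ⁅closure (X ∩ (γ k : Set G) ∪ γ (k + 1)), closure X⁆ := by
        rw [closure_union, closure_eq]
        exact commutator_mono ih le_rfl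
      _ ≤ _ := commutator_closure_le_of_normal ?_
    rintro s (⟨hsX, hsk⟩ | hs) t ht
    · exact mem_sup_left (subset_closure ⟨hX s hsX t ht, commutator_mem_commutator hsk (mem_top t)⟩)
    · exact mem_sup_right (commutator_mem_commutator hs (mem_top t))

end Subgroup

section CentralProducts

variable {G : Type*} [Group G]

theorem List.prod_ofFn_mul_prod_ofFn_of_mem_center {m : ℕ} (f c : Fin m → G)
    (hc : ∀ i, c i ∈ center G) :
    (List.ofFn f).prod * (List.ofFn c).prod = (List.ofFn (f * c)).prod := by
  induction m with
  | zero => simp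
  | succ m ih =>
    have ih' := ih (fun i => f i.succ) (fun i => c i.succ) (fun i => hc i.succ)
    simp only [Pi.mul_def] at ih'
    simp only [List.ofFn_succ, List.prod_cons, Pi.mul_apply, ← ih', mul_assoc]
    rw [← mul_assoc _ (c 0), mem_center_iff.1 (hc 0), mul_assoc]

theorem List.prod_ofFn_mulSingle {m : ℕ} (i : Fin m) (x : G) :
    (List.ofFn (Pi.mulSingle i x)).prod = x := by
  induction m with
  | zero => exact i.elim0
  | succ m ih =>
    rw [List.ofFn_succ, List.prod_cons]
    rcases Fin.eq_zero_or_eq_succ i with rfl | ⟨j, rfl⟩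
    · simp [Fin.succ_ne_zero]
    · rw [Pi.mulSingle_eq_of_ne (Fin.succ_ne_zero j).symm, one_mul]
      convert ih j using 3
      ext i
      simp [Pi.mulSingle_apply]

theorem exists_prod_ofFn_eq_of_mem_iSup_inf_center {m : ℕ} (Gs : Fin m → Subgroup G) {z : G}
    (hz : z ∈ ⨆ i, Gs i ⊓ center G) :
    ∃ c : Fin m → G, (∀ i, c i ∈ Gs i ⊓ center G) ∧ z = (List.ofFn c).prod := by
  induction hz using iSup_induction' with
  | hp i x hx =>
    refine ⟨Pi.mulSingle i x, fun j => ?_, (List.prod_ofFn_mulSingle i x).symm⟩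
    by_cases hj : j = i
    · subst hj; simpa using hx
    · simp [hj]
  | h1 => exact ⟨fun _ => 1, fun i => one_mem _, by simp⟩
  | hmul x y _ _ hx hy =>
    obtain ⟨cx, hcx, rfl⟩ := hx
    obtain ⟨cy, hcy, rfl⟩ := hy
    exact ⟨cx * cy, fun i => mul_mem (hcx i) (hcy i),
      List.prod_ofFn_mul_prod_ofFn_of_mem_center cx cy fun i => (hcy i).2⟩

end CentralProducts

theorem exists_prod_ofFn_eq_of_quotient {G : Type*} [Group G] {m : ℕ} (Gs : Fin m → Subgroup G)
    (N : Subgroup G) [N.Normal] (hN : N ≤ ⨆ i, Gs i ⊓ center G)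
    (h : ∀ q : G ⧸ N, ∃ f : Fin m → G ⧸ N,
      (∀ i, f i ∈ (Gs i).map (QuotientGroup.mk' N)) ∧ q = (List.ofFn f).prod)
    (g : G) : ∃ f : Fin m → G, (∀ i, f i ∈ Gs i) ∧ g = (List.ofFn f).prod := by
  obtain ⟨f', hf', hg⟩ := h g
  choose f hf hff' using fun i => mem_map.1 (hf' i)
  have hf'f : f' = QuotientGroup.mk' N ∘ f := funext fun i => (hff' i).symm
  have hfN : (List.ofFn f).prod⁻¹ * g ∈ N := by
    rw [← QuotientGroup.eq, hg, hf'f, ← List.map_ofFn, ← map_list_prod]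
    rfl
  obtain ⟨c, hc, hcprod⟩ := exists_prod_ofFn_eq_of_mem_iSup_inf_center Gs (hN hfN)
  refine ⟨f * c, fun i => mul_mem (hf i) (hc i).1, ?_⟩
  rw [← List.prod_ofFn_mul_prod_ofFn_of_mem_center f c fun i => (hc i).2, ← hcprod]
  group

theorem lowerCentralSeries_le_iSup_inf_center {G : Type*} [Group G] {n m : ℕ}
    (X : Set G) (hX : ∀ x ∈ X, ∀ y ∈ X, ⁅x, y⁆ ∈ X) (hgen : closure X = ⊤)
    (Gs : Fin m → Subgroup G) (hcover : X ⊆ ⋃ i, (Gs i : Set G))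
    (hn : (⊤ : Subgroup G).lowerCentralSeries (n + 1) = ⊥) :
    (⊤ : Subgroup G).lowerCentralSeries n ≤ ⨆ i, Gs i ⊓ center G := by
  have hcenter := commutator_top_right_eq_bot_iff_le_center.1 hn
  have hgenN := lowerCentralSeries_le_closure_inter_sup hX hgen n
  rw [hn, sup_bot_eq] at hgenN
  refine hgenN.trans (closure_le _ |>.2 ?_)
  rintro x ⟨hxX, hxN⟩
  obtain ⟨i, hi⟩ := Set.mem_iUnion.1 (hcover hxX)
  exact mem_iSup_of_mem i ⟨hi, hcenter hxN⟩

theorem exists_prod_ofFn_eq_of_lowerCentralSeries_eq_bot {G : Type*} [Group G] {n m : ℕ}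
    (X : Set G) (hX : ∀ x ∈ X, ∀ y ∈ X, ⁅x, y⁆ ∈ X) (hgen : closure X = ⊤)
    (Gs : Fin m → Subgroup G) (hcover : X ⊆ ⋃ i, (Gs i : Set G))
    (hn : (⊤ : Subgroup G).lowerCentralSeries n = ⊥) (g : G) :
    ∃ f : Fin m → G, (∀ i, f i ∈ Gs i) ∧ g = (List.ofFn f).prod := by
  induction n generalizing G with
  | zero =>
    obtain rfl : g = 1 := by rw [← mem_bot, ← hn]; exact mem_top g
    exact ⟨fun _ => 1, fun i => one_mem _, by simp⟩
  | succ n ih =>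
    set N := (⊤ : Subgroup G).lowerCentralSeries n
    have hN := lowerCentralSeries_le_iSup_inf_center X hX hgen Gs hcover hn
    refine exists_prod_ofFn_eq_of_quotient Gs N hN (fun q => ?_) g
    set π := QuotientGroup.mk' N
    have hπ : Function.Surjective π := QuotientGroup.mk'_surjective N
    refine ih (π '' X) ?_ ?_ (fun i => (Gs i).map π) ?_ ?_ q
    · rintro _ ⟨x, hx, rfl⟩ _ ⟨y, hy, rfl⟩
      exact ⟨_, hX x hx y hy, map_commutatorElement π x y⟩
    · rw [← MonoidHom.map_closure, hgen, map_top_of_surjective π hπ]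
    · rintro _ ⟨x, hx, rfl⟩
      obtain ⟨i, hi⟩ := Set.mem_iUnion.1 (hcover hx)
      exact Set.mem_iUnion.2 ⟨i, mem_map_of_mem π hi⟩
    · rw [← map_top_of_surjective π hπ, ← map_lowerCentralSeries, Subgroup.map_eq_bot_iff,
        QuotientGroup.ker_mk']

/-- A nilpotent group generated by a commutator-closed subset `X`
contained in the union of subgroups `G₁,…,G_m` equals the product set `G₁G₂⋯G_m`. -/
theorem statement2 {G : Type*} [Group G] [Group.IsNilpotent G] {m : ℕ}
    (X : Set G) (hX : ∀ x ∈ X, ∀ y ∈ X, ⁅x, y⁆ ∈ X)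
    (hgen : Subgroup.closure X = ⊤)
    (Gs : Fin m → Subgroup G) (hcover : X ⊆ ⋃ i, (Gs i : Set G)) :
    ∀ g : G, ∃ f : Fin m → G, (∀ i, f i ∈ Gs i) ∧ g = (List.ofFn f).prod := by
  obtain ⟨n, hn⟩ := Subgroup.nilpotent_iff_lowerCentralSeries.1 ‹Group.IsNilpotent G›
  exact exists_prod_ofFn_eq_of_lowerCentralSeries_eq_bot X hX hgen Gs hcover hn
end

section
/- For all positive integers d, m, n there exists a positive integer c (depending only on d, m and n) with the following property: if G is a soluble group of derived length at most d that is generated by m elements each of which is n-Engel in G, then G is nilpotent of class at most c. -/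
/-!
Induction on the derived length `d`. Let `A = G⁽ᵈ⁻¹⁾`, an abelian normal subgroup. By induction
`γ_c(G) ≤ A` for some `c = c(d - 1, m, n)`, so `G` acts on `A` by conjugation through the ring
`R = End(A)` with `γ_c(G)` acting trivially. Since `(1 - x) a = ⁅a, x⁆`, each generator satisfies
`(1 - x)ⁿ = 0` in `R`.

The ring argument is an induction on `c`, with `R` generated by the image of the group. If
`γ_{c+1}` acts trivially, the left-normed commutators `w` of weight `c + 1` in the generators map
to the centre of `R`, and writing `w = ⁅u, y⁆ = (u y u⁻¹) y⁻¹` as a product of two commuting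
unipotents gives `(1 - w)²ⁿ = 0`. There are at most `m ^ (c + 1)` of them, so by pigeonhole the
ideal `J` they generate satisfies `J ^ (m ^ (c + 1) * 2n + 1) = 0`, while modulo `J` already `γ_c`
acts trivially. Hence all products of `N = N(c, m, n)` factors `1 - xᵢ` vanish in `R`.

Finally `γ_{c+j}(G)` lies in the part of `A` killed by all products of `N - j` factors `1 - xᵢ`,
so `γ_{c+N}(G) = 1`.
-/

open scoped commutatorElement

open scoped Pointwise

namespace Subgroup

variable {G : Type*} [Group G]

theorem commutator_top_le_of_closure_eq_top {Y : Set G} (hY : closure Y = ⊤)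
    {V P : Subgroup G} [V.Normal] (h : ∀ v ∈ V, ∀ y ∈ Y, ⁅v, y⁆ ∈ P) : ⁅V, ⊤⁆ ≤ P := by
  rw [commutator_le]
  rintro v hv g -
  have hg : g ∈ closure Y := hY ▸ mem_top g
  induction hg using closure_induction generalizing v with
  | mem y hy => exact h v hv y hy
  | one => simp
  | mul g g' _ _ ih ih' =>
    rw [show ⁅v, g * g'⁆ = ⁅v, g'⁆ * ⁅g' * v * g'⁻¹, g⁆ by group]
    exact mul_mem (ih' v hv) (ih _ (Normal.conj_mem ‹_› v hv g'))
  | inv g _ ih =>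
    rw [show ⁅v, g⁻¹⁆ = ⁅g⁻¹ * v * g⁻¹⁻¹, g⁆⁻¹ by group]
    exact inv_mem (ih _ (Normal.conj_mem ‹_› v hv g⁻¹))

theorem mem_upperCentralSeriesStep_of_closure_eq_top {Y : Set G} (hY : closure Y = ⊤)
    {K : Subgroup G} [K.Normal] {x : G} (h : ∀ y ∈ Y, ⁅x, y⁆ ∈ K) :
    x ∈ upperCentralSeriesStep K := by
  intro g
  have hg : g ∈ closure Y := hY ▸ mem_top g
  induction hg using closure_induction with
  | mem y hy => exact h y hy
  | one => simp
  | mul g g' _ _ ih ih' =>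
    rw [show ⁅x, g * g'⁆ = ⁅x, g⁆ * (g * ⁅x, g'⁆ * g⁻¹) by group]
    exact mul_mem ih (Normal.conj_mem ‹_› _ ih' g)
  | inv g _ ih =>
    rw [show ⁅x, g⁻¹⁆ = g⁻¹ * ⁅x, g⁆⁻¹ * g⁻¹⁻¹ by group]
    exact Normal.conj_mem ‹_› _ (inv_mem ih) g⁻¹

end Subgroup

section LeftNormed

variable {G ι : Type*} [Group G]

def leftNormedComm (y : ι → G) : (c : ℕ) → (Fin (c + 1) → ι) → G
  | 0, v => y (v 0)
  | c + 1, v => ⁅leftNormedComm y c (Fin.init v), y (v (Fin.last (c + 1)))⁆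

theorem leftNormedComm_mem_lowerCentralSeries (y : ι → G) :
    ∀ c v, leftNormedComm y c v ∈ (⊤ : Subgroup G).lowerCentralSeries c
  | 0, _ => Subgroup.mem_top _
  | c + 1, _ => Subgroup.commutator_mem_commutator
      (leftNormedComm_mem_lowerCentralSeries y c _) (Subgroup.mem_top _)

theorem lowerCentralSeries_le_of_leftNormedComm_mem {y : ι → G}
    (hy : Subgroup.closure (Set.range y) = ⊤) (c : ℕ) {K : Subgroup G} [K.Normal]
    (hE : ∀ v, leftNormedComm y c v ∈ K)
    (hK : (⊤ : Subgroup G).lowerCentralSeries (c + 1) ≤ K) :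
    (⊤ : Subgroup G).lowerCentralSeries c ≤ K := by
  induction c generalizing K with
  | zero => exact hy ▸ (Subgroup.closure_le K).mpr (Set.range_subset_iff.mpr fun i => hE fun _ => i)
  | succ c ih =>
    have : (Subgroup.upperCentralSeriesStep K).Normal := by
      rw [Subgroup.upperCentralSeriesStep_eq_comap_center]; infer_instance
    have hstep : (⊤ : Subgroup G).lowerCentralSeries c ≤ Subgroup.upperCentralSeriesStep K := by
      refine ih (fun v => Subgroup.mem_upperCentralSeriesStep_of_closure_eq_top hy ?_) ?_
      · rintro _ ⟨i, rfl⟩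
        simpa [leftNormedComm] using hE (Fin.snoc v i)
      · exact fun x hx g => hK (Subgroup.commutator_mem_commutator hx (Subgroup.mem_top g))
    exact Subgroup.commutator_le.mpr fun x hx g _ => hstep hx g

end LeftNormed

section Unipotent

variable {Q R : Type*} [Group Q] [Ring R] (φ : Q →* R)

theorem commute_map_of_commutatorElement_mem_ker {a b : Q} (h : ⁅a, b⁆ ∈ φ.ker) :
    Commute (φ a) (φ b) := by
  have hab : a * b = ⁅a, b⁆ * (b * a) := by group
  rw [Commute, SemiconjBy, ← map_mul, hab, map_mul, MonoidHom.mem_ker.mp h, one_mul, map_mul]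

theorem commute_map_inv (g : Q) : Commute (φ g) (φ g⁻¹) :=
  commute_map_of_commutatorElement_mem_ker φ (by rw [show ⁅g, g⁻¹⁆ = 1 by group]; exact one_mem _)

theorem pow_one_sub_map_conj_eq_zero {g : Q} {n : ℕ} (hg : (1 - φ g) ^ n = 0) (u : Q) :
    (1 - φ (u * g * u⁻¹)) ^ n = 0 := by
  have hinv : ((φ.toHomUnits u)⁻¹ : Rˣ) = φ u⁻¹ := by rw [← map_inv, MonoidHom.coe_toHomUnits]
  have hconj : 1 - φ (u * g * u⁻¹) = φ.toHomUnits u * (1 - φ g) * ↑(φ.toHomUnits u)⁻¹ := by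
    rw [hinv, MonoidHom.coe_toHomUnits, mul_sub, mul_one, sub_mul, ← map_mul, ← map_mul, ← map_mul,
      mul_inv_cancel, map_one]
  rw [hconj, Units.conj_pow, hg, mul_zero, zero_mul]

theorem pow_one_sub_map_inv_eq_zero {g : Q} {n : ℕ} (hg : (1 - φ g) ^ n = 0) :
    (1 - φ g⁻¹) ^ n = 0 := by
  have hinv : 1 - φ g⁻¹ = -((1 - φ g) * φ g⁻¹) := by
    rw [sub_mul, one_mul, ← map_mul, mul_inv_cancel, map_one, neg_sub]
  have hc : Commute (1 - φ g) (φ g⁻¹) := (Commute.one_left _).sub_left (commute_map_inv φ g)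
  rw [hinv, neg_pow, hc.mul_pow, hg, zero_mul, mul_zero]

theorem pow_one_sub_map_mul_eq_zero {g h : Q} {n k : ℕ} (hc : Commute (φ g) (φ h))
    (hg : (1 - φ g) ^ n = 0) (hh : (1 - φ h) ^ k = 0) : (1 - φ (g * h)) ^ (n + k) = 0 := by
  have hsplit : 1 - φ (g * h) = (1 - φ g) + φ g * (1 - φ h) := by rw [map_mul]; noncomm_ring
  have hc' : Commute (φ g) (1 - φ h) := (Commute.one_right _).sub_right hc
  rw [hsplit]
  refine Commute.add_pow_eq_zero_of_add_le_succ_of_pow_eq_zero ?_ hg ?_ (Nat.le_succ _)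
  · exact (Commute.one_left _).sub_left ((Commute.refl _).mul_right hc')
  · rw [hc'.mul_pow, hh, mul_zero]

theorem pow_one_sub_map_commutatorElement_eq_zero {u g : Q} {n : ℕ}
    (hcen : φ ⁅u, g⁆ ∈ Subring.center R) (hg : (1 - φ g) ^ n = 0) :
    (1 - φ ⁅u, g⁆) ^ (n + n) = 0 := by
  have hc : Commute (φ (u * g * u⁻¹)) (φ g⁻¹) := by
    rw [show u * g * u⁻¹ = ⁅u, g⁆ * g by group, map_mul]
    have hz : Commute (φ ⁅u, g⁆) (φ g⁻¹) := (Subring.mem_center_iff.mp hcen _).symm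
    exact hz.mul_left (commute_map_inv φ g)
  rw [show ⁅u, g⁆ = u * g * u⁻¹ * g⁻¹ by group]
  exact pow_one_sub_map_mul_eq_zero φ hc (pow_one_sub_map_conj_eq_zero φ hg u)
    (pow_one_sub_map_inv_eq_zero φ hg)

end Unipotent

section CentralIdeal

theorem Fintype.prod_comp_eq_zero_of_card_mul_lt {M α κ : Type*} [CommMonoidWithZero M]
    [Fintype α] [Fintype κ] {w : κ → M} {e : ℕ} (hw : ∀ k, w k ^ e = 0) (g : α → κ)
    (hcard : Fintype.card κ * e < Fintype.card α) : ∏ a, w (g a) = 0 := by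
  classical
  obtain ⟨k, hk⟩ := Fintype.exists_lt_card_fiber_of_mul_lt_card g hcard
  rw [← Finset.prod_fiberwise Finset.univ g]
  refine Finset.prod_eq_zero (Finset.mem_univ k) ?_
  rw [Finset.prod_congr rfl fun a ha => by rw [(Finset.mem_filter.mp ha).2], Finset.prod_const]
  exact pow_eq_zero_of_le hk.le (hw k)

variable {R : Type*} [Ring R]

theorem Ideal.isTwoSided_span_of_subset_center {F : Set R} (hF : F ⊆ Subring.center R) :
    (Ideal.span F).IsTwoSided := by
  refine ⟨fun b ha => ?_⟩
  induction ha using Submodule.span_induction with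
  | mem x hx =>
    rw [← Subring.mem_center_iff.mp (hF hx) b]
    exact Ideal.mul_mem_left _ b (Ideal.subset_span hx)
  | zero => simp
  | add x y _ _ hx hy => rw [add_mul]; exact add_mem hx hy
  | smul r x _ hx => rw [smul_eq_mul, mul_assoc]; exact Ideal.mul_mem_left _ r hx

theorem Ideal.mul_mem_span_mul {F G : Set R} (hF : F ⊆ Subring.center R) {x y : R}
    (hx : x ∈ Ideal.span F) (hy : y ∈ Ideal.span G) : x * y ∈ Ideal.span (F * G) := by
  have := Ideal.isTwoSided_span_of_subset_center hF
  rw [← Ideal.span_mul_span']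
  exact Ideal.mul_mem_mul hx hy

theorem Ideal.coe_span_pow_subset {F : Set R} (hF : F ⊆ Subring.center R) :
    ∀ k : ℕ, (Ideal.span F : Set R) ^ k ⊆ Ideal.span (F ^ k)
  | 0 => by simp
  | k + 1 => by
    rw [pow_succ', pow_succ']
    rintro _ ⟨x, hx, y, hy, rfl⟩
    exact Ideal.mul_mem_span_mul hF hx (Ideal.coe_span_pow_subset hF k hy)

theorem Set.range_pow_subset_zero_of_pow_eq_zero {κ : Type*} [Fintype κ] {w : κ → R}
    (hc : ∀ k, w k ∈ Subring.center R) {e K : ℕ} (hw : ∀ k, w k ^ e = 0)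
    (hK : Fintype.card κ * e < K) : Set.range w ^ K ⊆ {0} := by
  let w' : κ → Subring.center R := fun k => ⟨w k, hc k⟩
  have hrange : Set.range w = (Subring.center R).subtype '' Set.range w' := by
    rw [← Set.range_comp]; rfl
  rw [hrange, ← Set.image_pow]
  rintro _ ⟨x, hx, rfl⟩
  obtain ⟨f, rfl⟩ := Set.mem_pow.mp hx
  choose g hg using fun i => (f i).2
  have hzero : ∏ i, w' (g i) = 0 :=
    Fintype.prod_comp_eq_zero_of_card_mul_lt (fun k => Subtype.ext (hw k)) g (by simpa using hK)
  simp [List.prod_ofFn, ← hg, hzero]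

theorem Ideal.coe_span_range_pow_subset_zero {κ : Type*} [Fintype κ] {w : κ → R}
    (hc : ∀ k, w k ∈ Subring.center R) {e : ℕ} (hw : ∀ k, w k ^ e = 0) :
    (Ideal.span (Set.range w) : Set R) ^ (Fintype.card κ * e + 1) ⊆ {0} := by
  have hzero : Ideal.span (Set.range w ^ (Fintype.card κ * e + 1)) = ⊥ :=
    Ideal.span_eq_bot.mpr fun _ hx =>
      Set.range_pow_subset_zero_of_pow_eq_zero hc hw (Nat.lt_succ_self _) hx
  simpa [hzero] using
    Ideal.coe_span_pow_subset (Set.range_subset_iff.mpr hc) (Fintype.card κ * e + 1)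

end CentralIdeal

section RingNilpotence

variable {Q R S : Type*} [Group Q] [Ring R] [Ring S]

theorem map_mem_center_of_closure_eq_top {φ : Q →* R} (hR : Subring.closure (Set.range φ) = ⊤)
    {z : Q} (hz : ∀ q, ⁅z, q⁆ ∈ φ.ker) : φ z ∈ Subring.center R := by
  have hle : Subring.closure (Set.range φ) ≤ Subring.centralizer {φ z} := by
    refine Subring.closure_le.mpr ?_
    rintro _ ⟨q, rfl⟩ _ rfl
    exact commute_map_of_commutatorElement_mem_ker φ (hz q)
  rw [hR] at hle
  exact Subring.mem_center_iff.mpr fun r => (hle (Subring.mem_top r) _ rfl).symm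

theorem closure_range_comp_eq_top {φ : Q →* R} (hR : Subring.closure (Set.range φ) = ⊤)
    {π : R →+* S} (hπ : Function.Surjective π) :
    Subring.closure (Set.range ((π : R →* S).comp φ)) = ⊤ := by
  rw [MonoidHom.coe_comp, Set.range_comp, MonoidHom.coe_coe, ← RingHom.map_closure, hR,
    ← RingHom.range_eq_map, RingHom.range_eq_top_of_surjective π hπ]

theorem closure_range_codRestrict_closure_range (φ : Q →* R) :
    Subring.closure (Set.range (φ.codRestrict (Subring.closure (Set.range φ))
      fun q => Subring.subset_closure ⟨q, rfl⟩)) = ⊤ := by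
  rw [eq_top_iff]
  rintro ⟨x, hx⟩ -
  induction hx using Subring.closure_induction with
  | mem _ h => obtain ⟨q, rfl⟩ := h; exact Subring.subset_closure ⟨q, rfl⟩
  | zero => exact zero_mem _
  | one => exact one_mem _
  | add _ _ _ _ h h' => exact add_mem h h'
  | neg _ _ h => exact neg_mem h
  | mul _ _ _ _ h h' => exact mul_mem h h'

theorem one_sub_comp_apply (π : R →+* S) (φ : Q →* R) (z : Q) :
    1 - ((π : R →* S).comp φ) z = π (1 - φ z) := by
  rw [map_sub, map_one]; rfl

theorem range_one_sub_pow_subset_ker {ι : Type*} (π : R →+* S) (φ : Q →* R) (y : ι → Q) {N : ℕ}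
    (h : Set.range (fun i => 1 - ((π : R →* S).comp φ) (y i)) ^ N ⊆ {0}) :
    Set.range (fun i => 1 - φ (y i)) ^ N ⊆ RingHom.ker π := by
  have hrange : Set.range (fun i => 1 - ((π : R →* S).comp φ) (y i)) =
      π '' Set.range (fun i => 1 - φ (y i)) := by
    simp_rw [one_sub_comp_apply]; exact Set.range_comp π _
  rw [hrange, ← Set.image_pow] at h
  exact fun x hx => h ⟨x, hx, rfl⟩

variable {m : ℕ} {φ : Q →* R} {y : Fin m → Q} {c : ℕ}

theorem map_leftNormedComm_mem_center (hR : Subring.closure (Set.range φ) = ⊤)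
    (hker : (⊤ : Subgroup Q).lowerCentralSeries (c + 1) ≤ φ.ker) (v : Fin (c + 1) → Fin m) :
    φ (leftNormedComm y c v) ∈ Subring.center R :=
  map_mem_center_of_closure_eq_top hR fun q => hker (Subgroup.commutator_mem_commutator
    (leftNormedComm_mem_lowerCentralSeries y c v) (Subgroup.mem_top q))

theorem pow_one_sub_map_leftNormedComm_eq_zero (hR : Subring.closure (Set.range φ) = ⊤)
    (hker : (⊤ : Subgroup Q).lowerCentralSeries (c + 1) ≤ φ.ker) {n : ℕ}
    (hy : ∀ i, (1 - φ (y i)) ^ n = 0) (v : Fin (c + 1) → Fin m) :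
    (1 - φ (leftNormedComm y c v)) ^ (n + n) = 0 := by
  cases c with
  | zero => exact pow_eq_zero_of_le (Nat.le_add_left n n) (hy (v 0))
  | succ c =>
    exact pow_one_sub_map_commutatorElement_eq_zero φ (map_leftNormedComm_mem_center hR hker v)
      (hy _)

theorem lowerCentralSeries_le_ker_comp (hy : Subgroup.closure (Set.range y) = ⊤)
    (hker : (⊤ : Subgroup Q).lowerCentralSeries (c + 1) ≤ φ.ker) {π : R →+* S}
    (hπ : ∀ v, π (1 - φ (leftNormedComm y c v)) = 0) :
    (⊤ : Subgroup Q).lowerCentralSeries c ≤ ((π : R →* S).comp φ).ker := by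
  have hmem : ∀ z, π (1 - φ z) = 0 → z ∈ ((π : R →* S).comp φ).ker := fun z hz =>
    (sub_eq_zero.mp ((one_sub_comp_apply π φ z).trans hz)).symm
  refine lowerCentralSeries_le_of_leftNormedComm_mem hy c (fun v => hmem _ (hπ v))
    fun z hz => hmem z ?_
  rw [MonoidHom.mem_ker.mp (hker hz), sub_self, map_zero]

end RingNilpotence

theorem exists_pow_range_one_sub_subset_zero_of_closure_eq_top (c m n : ℕ) :
    ∃ N, ∀ (R : Type*) [Ring R] (Q : Type*) [Group Q] (φ : Q →* R) (y : Fin m → Q),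
      Subgroup.closure (Set.range y) = ⊤ → Subring.closure (Set.range φ) = ⊤ →
      (⊤ : Subgroup Q).lowerCentralSeries c ≤ φ.ker → (∀ i, (1 - φ (y i)) ^ n = 0) →
      Set.range (fun i => 1 - φ (y i)) ^ N ⊆ {0} := by
  induction c with
  | zero =>
    refine ⟨1, fun R _ Q _ φ y _ _ hker _ => ?_⟩
    rw [pow_one]
    rintro _ ⟨i, rfl⟩
    simp [MonoidHom.mem_ker.mp (hker (Subgroup.mem_top (y i)))]
  | succ c ih =>
    obtain ⟨N, hN⟩ := ih
    refine ⟨N * (m ^ (c + 1) * (n + n) + 1), fun R _ Q _ φ y hy hR hker heng => ?_⟩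
    have hcen : ∀ v, 1 - φ (leftNormedComm y c v) ∈ Subring.center R :=
      fun v => sub_mem (one_mem _) (map_leftNormedComm_mem_center hR hker v)
    set J := Ideal.span (Set.range fun v => 1 - φ (leftNormedComm y c v))
    have := Ideal.isTwoSided_span_of_subset_center (Set.range_subset_iff.mpr hcen)
    have hJ : Set.range (fun i => 1 - φ (y i)) ^ N ⊆ J := by
      simpa using range_one_sub_pow_subset_ker (Ideal.Quotient.mk J) φ y <| hN (R ⧸ J) Q _ y hy
        (closure_range_comp_eq_top hR Ideal.Quotient.mk_surjective)
        (lowerCentralSeries_le_ker_comp hy hker fun v =>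
          Ideal.Quotient.eq_zero_iff_mem.mpr (Ideal.subset_span ⟨v, rfl⟩))
        fun i => by rw [one_sub_comp_apply, ← map_pow, heng i, map_zero]
    calc Set.range (fun i => 1 - φ (y i)) ^ (N * (m ^ (c + 1) * (n + n) + 1))
        = (Set.range (fun i => 1 - φ (y i)) ^ N) ^ (m ^ (c + 1) * (n + n) + 1) := pow_mul _ _ _
      _ ⊆ (J : Set R) ^ (m ^ (c + 1) * (n + n) + 1) := Set.pow_subset_pow_left hJ
      _ ⊆ {0} := by
        simpa using Ideal.coe_span_range_pow_subset_zero hcen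
          (pow_one_sub_map_leftNormedComm_eq_zero hR hker heng)

theorem exists_pow_range_one_sub_subset_zero (c m n : ℕ) :
    ∃ N, ∀ (R : Type*) [Ring R] (Q : Type*) [Group Q] (φ : Q →* R) (y : Fin m → Q),
      Subgroup.closure (Set.range y) = ⊤ →
      (⊤ : Subgroup Q).lowerCentralSeries c ≤ φ.ker → (∀ i, (1 - φ (y i)) ^ n = 0) →
      Set.range (fun i => 1 - φ (y i)) ^ N ⊆ {0} := by
  obtain ⟨N, hN⟩ := exists_pow_range_one_sub_subset_zero_of_closure_eq_top c m n
  refine ⟨N, fun R _ Q _ φ y hy hker heng => ?_⟩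
  let S := Subring.closure (Set.range φ)
  let ψ := φ.codRestrict S fun q => Subring.subset_closure ⟨q, rfl⟩
  have hψ : ∀ q, (ψ q : R) = φ q := fun _ => rfl
  have h := hN S Q ψ y hy (closure_range_codRestrict_closure_range φ)
    (fun z hz => Subtype.ext (hψ z ▸ hker hz)) fun i => Subtype.ext (by simpa [hψ] using heng i)
  have hrange :
      Set.range (fun i => 1 - φ (y i)) = S.subtype '' Set.range (fun i => 1 - ψ (y i)) := by
    rw [← Set.range_comp]; rfl
  rw [hrange, ← Set.image_pow]
  rintro _ ⟨x, hx, rfl⟩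
  simpa using h hx

section AbelianNormal

open scoped IsMulCommutative

variable {G : Type*} [Group G] (A : Subgroup G) [IsMulCommutative A]

def annihilatedBy (P : Set (Module.End ℤ (Additive A))) : Subgroup G where
  carrier := {g | ∃ h : g ∈ A, ∀ p ∈ P, p (Additive.ofMul ⟨g, h⟩) = 0}
  one_mem' := ⟨one_mem A, fun p _ => map_zero p⟩
  mul_mem' := fun ⟨ha, hpa⟩ ⟨hb, hpb⟩ => ⟨mul_mem ha hb, fun p hp => by
    change p (Additive.ofMul ⟨_, ha⟩ + Additive.ofMul ⟨_, hb⟩) = 0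
    rw [map_add, hpa p hp, hpb p hp, add_zero]⟩
  inv_mem' := fun ⟨ha, hpa⟩ => ⟨inv_mem ha, fun p hp => by
    change p (-Additive.ofMul ⟨_, ha⟩) = 0
    rw [map_neg, hpa p hp, neg_zero]⟩

theorem le_annihilatedBy_of_subset_zero {P : Set (Module.End ℤ (Additive A))} (hP : P ⊆ {0}) :
    A ≤ annihilatedBy A P := fun g hg => ⟨hg, fun p hp => by rw [hP hp]; rfl⟩

theorem annihilatedBy_one : annihilatedBy A 1 = ⊥ := by
  refine eq_bot_iff.mpr fun g ⟨hg, hP⟩ => ?_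
  have h : Additive.ofMul (⟨g, hg⟩ : A) = 0 := hP 1 rfl
  exact congrArg Subtype.val h

variable [A.Normal]

def conjRep : Representation ℤ G (Additive A) :=
  (Representation.ofMulDistribMulAction (ConjAct G) A).comp ConjAct.toConjAct.toMonoidHom

theorem coe_toMul_conjRep_apply (g : G) (a : A) :
    (((conjRep A g (Additive.ofMul a)).toMul : A) : G) = g * a * g⁻¹ := by
  simp [conjRep, ConjAct.Subgroup.val_conj_smul, ConjAct.toConjAct_smul]

theorem coe_toMul_one_sub_conjRep_apply (g : G) (a : A) :
    ((((1 - conjRep A g) (Additive.ofMul a)).toMul : A) : G) = ⁅(a : G), g⁆ := by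
  rw [LinearMap.sub_apply, Module.End.one_apply, toMul_sub, Subgroup.coe_div, toMul_ofMul,
    coe_toMul_conjRep_apply, commutatorElement_def, div_eq_mul_inv]
  group

theorem coe_toMul_pow_one_sub_conjRep_apply (x : G) (a : A) :
    ∀ k, ((((1 - conjRep A x) ^ k) (Additive.ofMul a)).toMul : G) = engel (a : G) x k
  | 0 => rfl
  | k + 1 => by
    rw [pow_succ', Module.End.mul_apply, ← ofMul_toMul (((1 - conjRep A x) ^ k) _),
      coe_toMul_one_sub_conjRep_apply, coe_toMul_pow_one_sub_conjRep_apply x a k]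
    rfl

theorem pow_one_sub_conjRep_eq_zero {n : ℕ} {x : G} (hx : IsNEngel n x) :
    (1 - conjRep A x) ^ n = 0 := by
  refine LinearMap.ext fun a => ?_
  apply Additive.toMul.injective
  apply Subtype.ext
  rw [← ofMul_toMul a, coe_toMul_pow_one_sub_conjRep_apply, hx]
  rfl

theorem le_ker_conjRep : A ≤ (conjRep A).ker := fun z hz => by
  refine LinearMap.ext fun a => ?_
  apply Additive.toMul.injective
  apply Subtype.ext
  rw [← ofMul_toMul a, coe_toMul_conjRep_apply, setLike_mul_comm hz (Additive.toMul a).2,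
    mul_inv_cancel_right]
  rfl

theorem commutatorElement_mem_annihilatedBy {P P' : Set (Module.End ℤ (Additive A))} {g x : G}
    (hP : ∀ p ∈ P, p * (1 - conjRep A x) ∈ P') (hg : g ∈ annihilatedBy A P') :
    ⁅g, x⁆ ∈ annihilatedBy A P := by
  obtain ⟨hgA, hP'⟩ := hg
  have hb := coe_toMul_one_sub_conjRep_apply A x ⟨g, hgA⟩
  refine ⟨hb ▸ Subtype.prop _, fun p hp => ?_⟩
  rw [show (⟨⁅g, x⁆, _⟩ : A) = _ from Subtype.ext hb.symm, ofMul_toMul]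
  exact hP' _ (hP p hp)

end AbelianNormal

theorem exists_lowerCentralSeries_add_eq_bot (c m n : ℕ) :
    ∃ N, ∀ (G : Type*) [Group G] (x : Fin m → G) (A : Subgroup G) [A.Normal]
      [IsMulCommutative A], Subgroup.closure (Set.range x) = ⊤ → (∀ i, IsNEngel n (x i)) →
      (⊤ : Subgroup G).lowerCentralSeries c ≤ A →
      (⊤ : Subgroup G).lowerCentralSeries (c + N) = ⊥ := by
  obtain ⟨N, hN⟩ := exists_pow_range_one_sub_subset_zero c m n
  refine ⟨N, fun G _ x A _ _ hx heng hA => ?_⟩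
  set T := Set.range fun i => 1 - conjRep A (x i)
  have hT : T ^ N ⊆ {0} := hN _ G (conjRep A) x hx (hA.trans (le_ker_conjRep A))
    fun i => pow_one_sub_conjRep_eq_zero A (heng i)
  have hchain : ∀ j k, j + k = N →
      (⊤ : Subgroup G).lowerCentralSeries (c + j) ≤ annihilatedBy A (T ^ k) := by
    intro j
    induction j with
    | zero =>
      intro k hk
      rw [zero_add] at hk
      exact hA.trans (le_annihilatedBy_of_subset_zero A (hk ▸ hT))
    | succ j ih =>
      intro k hk
      rw [← add_assoc, Subgroup.lowerCentralSeries_succ]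
      refine Subgroup.commutator_top_le_of_closure_eq_top hx ?_
      rintro v hv _ ⟨i, rfl⟩
      refine commutatorElement_mem_annihilatedBy A (fun p hp => ?_) (ih (k + 1) (by omega) hv)
      rw [pow_succ]
      exact Set.mul_mem_mul hp ⟨i, rfl⟩
  rw [eq_bot_iff, ← annihilatedBy_one A]
  exact hchain N 0 rfl

theorem IsNEngel.map {G H : Type*} [Group G] [Group H] {f : G →* H} (hf : Function.Surjective f)
    {n : ℕ} {x : G} (hx : IsNEngel n x) : IsNEngel n (f x) := by
  intro z
  obtain ⟨y, rfl⟩ := hf z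
  suffices ∀ k, f (engel y x k) = engel (f y) (f x) k by rw [← this, hx y, map_one]
  intro k
  induction k with
  | zero => rfl
  | succ k ih => exact (map_commutatorElement f _ _).trans (by rw [ih]; rfl)

theorem statement3_general (d m n : ℕ) :
    ∃ c : ℕ, 0 < c ∧
      ∀ (G : Type*) [Group G], derivedSeries G d = ⊥ →
        ∀ xs : Fin m → G, Subgroup.closure (Set.range xs) = ⊤ →
          (∀ i, IsNEngel n (xs i)) →
          (⊤ : Subgroup G).lowerCentralSeries c = ⊥ := by
  induction d with
  | zero =>
    refine ⟨1, Nat.one_pos, fun G _ hG _ _ _ => ?_⟩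
    rw [derivedSeries_zero] at hG
    exact eq_bot_iff.mpr (hG ▸ le_top)
  | succ d ih =>
    obtain ⟨c, hc, hquot⟩ := ih
    obtain ⟨N, hN⟩ := exists_lowerCentralSeries_add_eq_bot c m n
    refine ⟨c + N, by omega, fun G _ hG xs hxs heng => ?_⟩
    set A := derivedSeries G d
    have : IsMulCommutative A := Subgroup.commutator_self_eq_bot_iff.mp hG
    have hsurj := QuotientGroup.mk'_surjective A
    have hγ := hquot (G ⧸ A)
      (by rw [← map_derivedSeries_eq hsurj, Subgroup.map_eq_bot_iff, QuotientGroup.ker_mk'])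
      (QuotientGroup.mk' A ∘ xs)
      (by rw [Set.range_comp, ← MonoidHom.map_closure, hxs, Subgroup.map_top_of_surjective _ hsurj])
      fun i => (heng i).map hsurj
    refine hN G xs A hxs heng ?_
    rw [← QuotientGroup.ker_mk' A, ← Subgroup.map_eq_bot_iff, Subgroup.map_lowerCentralSeries,
      Subgroup.map_top_of_surjective _ hsurj, hγ]

/-- For all positive `d, m, n` there is a positive `c = c(d,m,n)` such
that every soluble group of derived length at most `d` generated by `m` elements,
each `n`-Engel, is nilpotent of class at most `c`. -/
theorem statement3 (d m n : ℕ) (hd : 0 < d) (hm : 0 < m) (hn : 0 < n) :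
    ∃ c : ℕ, 0 < c ∧
      ∀ (G : Type*) [Group G], derivedSeries G d = ⊥ →
        ∀ xs : Fin m → G, Subgroup.closure (Set.range xs) = ⊤ →
          (∀ i, IsNEngel n (xs i)) →
          (⊤ : Subgroup G).lowerCentralSeries c = ⊥ :=
  statement3_general d m n
end

section
/- For every multilinear commutator word w and all positive integers k, m there exists a positive integer r (depending only on k and m) with the following property: if G is a soluble group of derived length at most k having subgroups G₁, …, G_m whose union contains all w-values in G, then every element of the verbal subgroup w(G) can be written as a product of at most r elements each belonging to one of the subgroups G₁, …, G_m. -/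
open scoped commutatorElement

/-!
Let `Aⱼ` be the set of `w`-values lying in `G⁽ʲ⁾` and `Bⱼ` the set of `w`-values with some entry
in `G⁽ʲ⁾`. Since `w` is multilinear, moving each entry `fᵢ` of a `w`-value within its coset
modulo a normal subgroup `Mᵢ` changes the value by a product of `w`-values that have, for some
`i`, their `i`-th entry in `Mᵢ`. Comparing `w(f)⁻¹` with its conjugate by `y`, this gives
`[Aⱼ, G⁽ʲ⁾] ⊆ ⟨Bⱼ⟩` and `[Bⱼ, G⁽ʲ⁾] ⊆ ⟨Aⱼ₊₁⟩`, the latter because a value with two entries in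
`G⁽ʲ⁾` lies in `G⁽ʲ⁺¹⁾`. So `⟨Aⱼ⟩` is abelian modulo `⟨Bⱼ⟩` and `⟨Bⱼ⟩` is abelian modulo
`⟨Aⱼ₊₁⟩`; as all generators lie in `G₁ ∪ ⋯ ∪ Gₘ`, every element of `⟨Aⱼ⟩` is `g₁ ⋯ gₘ` with
`gᵢ ∈ Gᵢ` modulo `⟨Bⱼ⟩`, and likewise one step further down. Descending from `⟨A₀⟩ = w(G)` to
`⟨Aₖ⟩ = 1` uses `2km` factors.
-/

theorem QuotientGroup.commute_mk'_iff {G : Type*} [Group G] {K : Subgroup G} [K.Normal]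
    {a b : G} : Commute (mk' K a) (mk' K b) ↔ ⁅a, b⁆ ∈ K := by
  rw [← commutatorElement_eq_one_iff_commute, ← map_commutatorElement, mk'_apply, eq_one_iff]

namespace Subgroup

variable {G : Type*} [Group G]

theorem normal_closure_of_conj_mem {s : Set G} (hs : ∀ g, ∀ x ∈ s, g * x * g⁻¹ ∈ s) :
    (closure s).Normal := by
  have : normalClosure s ≤ closure s := by
    refine closure_mono fun x hx => ?_
    obtain ⟨a, ha, hax⟩ := Group.mem_conjugatesOfSet_iff.mp hx
    obtain ⟨c, rfl⟩ := isConj_iff.mp hax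
    exact hs c a ha
  rw [← le_antisymm this closure_le_normalClosure]
  infer_instance

theorem commutator_mem_of_mem_closure {K : Subgroup G} [K.Normal] {S T : Set G}
    (h : ∀ s ∈ S, ∀ t ∈ T, ⁅s, t⁆ ∈ K) {a b : G} (ha : a ∈ closure S) (hb : b ∈ closure T) :
    ⁅a, b⁆ ∈ K := by
  let π := QuotientGroup.mk' K
  have hT : closure (π '' T) ≤ centralizer (closure (π '' S)) := by
    rw [centralizer_closure, closure_le]
    rintro _ ⟨t, ht, rfl⟩ _ ⟨s, hs, rfl⟩
    exact QuotientGroup.commute_mk'_iff.mpr (h s hs t ht)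
  have ha' : π a ∈ closure (π '' S) := by rw [← MonoidHom.map_closure]; exact mem_map_of_mem π ha
  have hb' : π b ∈ closure (π '' T) := by rw [← MonoidHom.map_closure]; exact mem_map_of_mem π hb
  exact QuotientGroup.commute_mk'_iff.mp (mem_centralizer_iff.mp (hT hb') _ ha')

theorem exists_ofFn_prod_eq_of_mem_iSup {m : ℕ} {H : Fin m → Subgroup G}
    (hcomm : Pairwise fun i j => ∀ x y : G, x ∈ H i → y ∈ H j → Commute x y) {g : G}
    (hg : g ∈ ⨆ i, H i) : ∃ l : Fin m → G, (∀ i, l i ∈ H i) ∧ (List.ofFn l).prod = g := by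
  rw [← noncommPiCoprod_range (hcomm := hcomm)] at hg
  obtain ⟨h, rfl⟩ := hg
  refine ⟨fun i => h i, fun i => (h i).2, ?_⟩
  simp [noncommPiCoprod, MonoidHom.noncommPiCoprod, Finset.noncommProd, Multiset.noncommProd_coe]

/-- Modulo `K`, the group generated by `X` is abelian, so it is the product of its intersections
with the `H i`. -/
theorem exists_ofFn_prod_inv_mul_mem_of_mem_closure {K : Subgroup G} [K.Normal] {X : Set G}
    (hX : ∀ x ∈ X, ∀ y ∈ X, ⁅x, y⁆ ∈ K) {m : ℕ} {H : Fin m → Subgroup G}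
    (hcov : X ⊆ ⋃ i, (H i : Set G)) {g : G} (hg : g ∈ closure X) :
    ∃ l : Fin m → G, (∀ i, l i ∈ H i) ∧ (List.ofFn l).prod⁻¹ * g ∈ K := by
  let π := QuotientGroup.mk' K
  let H' i := (H i ⊓ closure X).map π
  have hcomm : Pairwise fun i j => ∀ x y, x ∈ H' i → y ∈ H' j → Commute x y := by
    rintro i j - _ _ ⟨a, ha, rfl⟩ ⟨b, hb, rfl⟩
    exact QuotientGroup.commute_mk'_iff.mpr (commutator_mem_of_mem_closure hX ha.2 hb.2)
  have hg' : π g ∈ ⨆ i, H' i := by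
    rw [← map_iSup]
    refine mem_map_of_mem π ((closure_le _).mpr (fun x hx => ?_) hg)
    obtain ⟨i, hi⟩ := Set.mem_iUnion.mp (hcov hx)
    exact mem_iSup_of_mem i ⟨hi, subset_closure hx⟩
  obtain ⟨l', hl', hprod⟩ := exists_ofFn_prod_eq_of_mem_iSup hcomm hg'
  choose l hl hπ using hl'
  refine ⟨l, fun i => (hl i).1, (QuotientGroup.eq (s := K)).mp ?_⟩
  change π _ = π g
  rw [← hprod, map_list_prod, List.map_ofFn]
  exact congrArg _ (congrArg _ (funext hπ))

end Subgroup

namespace MCWord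

variable {G : Type*} [Group G]

open Subgroup (mem_top commutator_mem_commutator commutator_le_left commutator_le_right)

theorem map_eval {H : Type*} [Group H] {F : Type*} [FunLike F G H] [MonoidHomClass F G H]
    (φ : F) {q : ℕ} (w : MCWord q) (f : Fin q → G) : φ (w.eval f) = w.eval (φ ∘ f) := by
  induction w with
  | var => rfl
  | comm u v ihu ihv => simp only [eval, map_commutatorElement, ihu, ihv]; rfl

theorem eval_comm_append {a b : ℕ} (u : MCWord a) (v : MCWord b) (x : Fin a → G)
    (y : Fin b → G) : (comm u v).eval (Fin.append x y) = ⁅u.eval x, v.eval y⁆ := by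
  simp only [eval, Fin.append_left, Fin.append_right]

theorem eval_mem_of_mem {q : ℕ} (w : MCWord q) {f : Fin q → G} {N : Subgroup G} [N.Normal]
    {i : Fin q} (hi : f i ∈ N) : w.eval f ∈ N := by
  induction w with
  | var => rwa [Fin.fin_one_eq_zero i] at hi
  | @comm a b u v ihu ihv =>
    refine Fin.addCases (fun i hi => ?_) (fun i hi => ?_) i hi
    · exact commutator_le_left _ _ (commutator_mem_commutator (ihu hi) (mem_top _))
    · exact commutator_le_right _ _ (commutator_mem_commutator (mem_top _) (ihv hi))

theorem eval_mem_commutator {q : ℕ} (w : MCWord q) {f : Fin q → G} {N₁ N₂ : Subgroup G}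
    [N₁.Normal] [N₂.Normal] {i j : Fin q} (hij : i ≠ j) (hi : f i ∈ N₁) (hj : f j ∈ N₂) :
    w.eval f ∈ ⁅N₁, N₂⁆ := by
  induction w with
  | var => exact absurd (Subsingleton.elim i j) hij
  | @comm a b u v ihu ihv =>
    cases i using Fin.addCases with
    | left i =>
      cases j using Fin.addCases with
      | left j =>
        exact commutator_le_left _ _ <| commutator_mem_commutator
          (ihu (fun h => hij (congrArg _ h)) hi hj) (mem_top _)
      | right j =>
        exact commutator_mem_commutator (eval_mem_of_mem u hi) (eval_mem_of_mem v hj)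
    | right i =>
      cases j using Fin.addCases with
      | left j =>
        rw [Subgroup.commutator_comm]
        exact commutator_mem_commutator (eval_mem_of_mem u hj) (eval_mem_of_mem v hi)
      | right j =>
        exact commutator_le_right _ _ <| commutator_mem_commutator
          (mem_top _) (ihv (fun h => hij (congrArg _ h)) hi hj)

theorem exists_eval_eq_inv {q : ℕ} (w : MCWord q) {N : Fin q → Subgroup G}
    (hN : ∀ i, (N i).Normal) {f : Fin q → G} (hf : ∀ i, f i ∈ N i) :
    ∃ f' : Fin q → G, (∀ i, f' i ∈ N i) ∧ w.eval f' = (w.eval f)⁻¹ := by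
  induction w with
  | var => exact ⟨f⁻¹, fun i => inv_mem (hf i), rfl⟩
  | @comm a b u v ihu ihv =>
    obtain ⟨hfu, hfv⟩ := (Fin.forall_fin_add _).mp hf
    obtain ⟨x, hx, hux⟩ := ihu (fun i => hN _) hfu
    set p := u.eval fun i => f (Fin.castAdd b i)
    set r := v.eval fun i => f (Fin.natAdd a i)
    refine ⟨MulAut.conj p ∘ Fin.append x fun i => f (Fin.natAdd a i), fun i => ?_, ?_⟩
    · cases i using Fin.addCases with
      | left i => simpa using (hN _).conj_mem _ (hx i) p
      | right i => simpa using (hN _).conj_mem _ (hfv i) p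
    · rw [← map_eval, eval_comm_append, hux, MulAut.conj_apply]
      change p * ⁅p⁻¹, r⁆ * p⁻¹ = ⁅p, r⁆⁻¹
      simp only [commutatorElement_def]
      group

def mixedValues {q : ℕ} (w : MCWord q) (N M : Fin q → Subgroup G) : Set G :=
  {g | ∃ f : Fin q → G, (∀ i, f i ∈ N i) ∧ (∃ j, f j ∈ M j) ∧ w.eval f = g}

theorem normal_closure_mixedValues {q : ℕ} (w : MCWord q) {N M : Fin q → Subgroup G}
    (hN : ∀ i, (N i).Normal) (hM : ∀ i, (M i).Normal) :
    (Subgroup.closure (w.mixedValues N M)).Normal :=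
  Subgroup.normal_closure_of_conj_mem fun g _ ⟨f, hf, ⟨j, hj⟩, hfg⟩ =>
    ⟨MulAut.conj g ∘ f, fun i => (hN i).conj_mem _ (hf i) g, ⟨j, (hM j).conj_mem _ hj g⟩,
      by rw [← map_eval, hfg, MulAut.conj_apply]⟩

theorem commutator_mem_mixedValues_comm {a b : ℕ} (u : MCWord a) (v : MCWord b)
    {N M : Fin (a + b) → Subgroup G} {x : Fin a → G} {y : Fin b → G}
    (hx : ∀ i, x i ∈ N (Fin.castAdd b i)) (hy : ∀ j, y j ∈ N (Fin.natAdd a j))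
    (hxy : (∃ i, x i ∈ M (Fin.castAdd b i)) ∨ ∃ j, y j ∈ M (Fin.natAdd a j)) :
    ⁅u.eval x, v.eval y⁆ ∈ (comm u v).mixedValues N M := by
  refine ⟨Fin.append x y, (Fin.forall_fin_add _).mpr ⟨by simpa using hx, by simpa using hy⟩,
    ?_, eval_comm_append u v x y⟩
  rcases hxy with ⟨i, hi⟩ | ⟨j, hj⟩
  · exact ⟨Fin.castAdd b i, by simpa using hi⟩
  · exact ⟨Fin.natAdd a j, by simpa using hj⟩

theorem inv_eval_mul_eval_mem_closure_mixedValues {q : ℕ} (w : MCWord q)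
    {N M : Fin q → Subgroup G} (hN : ∀ i, (N i).Normal) (hM : ∀ i, (M i).Normal)
    {f f' : Fin q → G} (hf : ∀ i, f i ∈ N i) (hf' : ∀ i, f' i ∈ N i)
    (hff' : ∀ i, (f i)⁻¹ * f' i ∈ M i) :
    (w.eval f)⁻¹ * w.eval f' ∈ Subgroup.closure (w.mixedValues N M) := by
  induction w with
  | var =>
    refine Subgroup.subset_closure ⟨fun _ => (f 0)⁻¹ * f' 0, fun i => ?_, ⟨0, hff' 0⟩, rfl⟩
    rw [Fin.fin_one_eq_zero i]
    exact mul_mem (inv_mem (hf 0)) (hf' 0)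
  | @comm a b u v ihu ihv =>
    obtain ⟨hfu, hfv⟩ := (Fin.forall_fin_add _).mp hf
    obtain ⟨hfu', hfv'⟩ := (Fin.forall_fin_add _).mp hf'
    obtain ⟨hffu, hffv⟩ := (Fin.forall_fin_add _).mp hff'
    have := normal_closure_mixedValues (comm u v) hN hM
    set P := u.eval fun i => f (Fin.castAdd b i)
    set P' := u.eval fun i => f' (Fin.castAdd b i)
    set Q := v.eval fun i => f (Fin.natAdd a i)
    set Q' := v.eval fun i => f' (Fin.natAdd a i)
    have hP : ⁅P⁻¹ * P', Q'⁆ ∈ Subgroup.closure ((comm u v).mixedValues N M) :=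
      Subgroup.commutator_mem_of_mem_closure (T := {Q'})
        (by
          rintro _ ⟨x, hx, hxM, rfl⟩ _ rfl
          exact Subgroup.subset_closure (commutator_mem_mixedValues_comm u v hx hfv' (Or.inl hxM)))
        (ihu (fun _ => hN _) (fun _ => hM _) hfu hfu' hffu) (Subgroup.subset_closure rfl)
    have hQ : ⁅P, Q⁻¹ * Q'⁆ ∈ Subgroup.closure ((comm u v).mixedValues N M) :=
      Subgroup.commutator_mem_of_mem_closure (S := {P})
        (by
          rintro _ rfl _ ⟨y, hy, hyM, rfl⟩
          exact Subgroup.subset_closure (commutator_mem_mixedValues_comm u v hfu hy (Or.inr hyM)))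
        (Subgroup.subset_closure rfl) (ihv (fun _ => hN _) (fun _ => hM _) hfv hfv' hffv)
    have expand : ⁅P, Q⁆⁻¹ * ⁅P', Q'⁆ =
        (⁅P, Q⁆⁻¹ * (P * ⁅P⁻¹ * P', Q'⁆ * P⁻¹) * ⁅P, Q⁆⁻¹⁻¹) * (Q * ⁅P, Q⁻¹ * Q'⁆ * Q⁻¹) := by
      simp only [commutatorElement_def]
      group
    change ⁅P, Q⁆⁻¹ * ⁅P', Q'⁆ ∈ _
    rw [expand]
    exact mul_mem (this.conj_mem _ (this.conj_mem _ hP P) _) (this.conj_mem _ hQ Q)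

theorem commutator_eval_mem_closure_mixedValues {q : ℕ} (w : MCWord q)
    {N M : Fin q → Subgroup G} (hN : ∀ i, (N i).Normal) (hM : ∀ i, (M i).Normal)
    {f : Fin q → G} (hf : ∀ i, f i ∈ N i) {y : G} (hy : ∀ i, ∀ a ∈ N i, ⁅a, y⁆ ∈ M i) :
    ⁅w.eval f, y⁆ ∈ Subgroup.closure (w.mixedValues N M) := by
  obtain ⟨f₁, hf₁, hinv⟩ := exists_eval_eq_inv w hN hf
  -- `⁅x, y⁆ = (x⁻¹)⁻¹ * (y * x⁻¹ * y⁻¹)`, and conjugating by `y` moves each entry of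
  -- `x⁻¹ = w.eval f₁` only within its coset modulo `M i`
  have key := inv_eval_mul_eval_mem_closure_mixedValues w hN hM hf₁
    (f' := MulAut.conj y ∘ f₁) (fun i => (hN i).conj_mem _ (hf₁ i) y)
    (fun i => by simpa [commutatorElement_def, mul_assoc] using hy i _ (inv_mem (hf₁ i)))
  rw [← map_eval, hinv, MulAut.conj_apply, inv_inv] at key
  simpa [commutatorElement_def, mul_assoc] using key

theorem normal_closure_wValues_inter {q : ℕ} (w : MCWord q) (N : Subgroup G) [N.Normal] :
    (Subgroup.closure (wValues w ∩ (N : Set G))).Normal :=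
  Subgroup.normal_closure_of_conj_mem fun g _ ⟨⟨f, hf⟩, hN⟩ =>
    ⟨⟨MulAut.conj g ∘ f, by rw [← map_eval, hf, MulAut.conj_apply]⟩,
      Subgroup.Normal.conj_mem ‹_› _ hN g⟩

theorem commutator_mem_closure_mixedValues {q : ℕ} (w : MCWord q) {j : ℕ} {x y : G}
    (hx : x ∈ wValues w) (hy : y ∈ derivedSeries G j) :
    ⁅x, y⁆ ∈ Subgroup.closure (w.mixedValues (fun _ => ⊤) fun _ => derivedSeries G j) := by
  obtain ⟨f, rfl⟩ := hx
  exact commutator_eval_mem_closure_mixedValues w (fun _ => inferInstance) (fun _ => inferInstance)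
    (fun _ => mem_top _) fun _ a _ =>
      commutator_le_right _ _ (commutator_mem_commutator (mem_top a) hy)

theorem commutator_mem_closure_wValues_inter {q : ℕ} (w : MCWord q) {j : ℕ} {x y : G}
    (hx : x ∈ w.mixedValues (fun _ => ⊤) fun _ => derivedSeries G j)
    (hy : y ∈ derivedSeries G j) :
    ⁅x, y⁆ ∈ Subgroup.closure (wValues w ∩ derivedSeries G (j + 1)) := by
  classical
  obtain ⟨f, -, ⟨d, hd⟩, rfl⟩ := hx
  let N i : Subgroup G := if i = d then derivedSeries G j else ⊤
  let M i := if i = d then derivedSeries G (j + 1) else derivedSeries G j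
  have key := commutator_eval_mem_closure_mixedValues w (N := N) (M := M)
    (fun i => by dsimp only [N]; split_ifs <;> infer_instance)
    (fun i => by dsimp only [M]; split_ifs <;> infer_instance)
    (fun i => by dsimp only [N]; split_ifs with h; exacts [h ▸ hd, mem_top _])
    (fun i a ha => by
      dsimp only [N, M] at ha ⊢
      split_ifs at ha ⊢
      · exact commutator_mem_commutator ha hy
      · exact commutator_le_right _ _
          (commutator_mem_commutator (mem_top a) hy))
  refine Subgroup.closure_mono ?_ key
  rintro _ ⟨h, hN, ⟨i, hi⟩, rfl⟩
  refine ⟨⟨h, rfl⟩, ?_⟩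
  have hd : h d ∈ derivedSeries G j := by simpa [N] using hN d
  by_cases hid : i = d
  · subst hid
    exact eval_mem_of_mem w (by simpa [M] using hi)
  · rw [derivedSeries_succ]
    exact eval_mem_commutator w hid (by simpa [M, hid] using hi) hd

theorem exists_list_prod_eq_of_mem_closure_wValues_inter {q : ℕ} (w : MCWord q) {m : ℕ}
    {Gs : Fin m → Subgroup G} (hcov : wValues w ⊆ ⋃ i, (Gs i : Set G)) (d : ℕ) :
    ∀ {j : ℕ}, derivedSeries G (j + d) = ⊥ →
      ∀ g ∈ Subgroup.closure (wValues w ∩ derivedSeries G j),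
        ∃ l : List G, l.length = 2 * d * m ∧ (∀ x ∈ l, ∃ i, x ∈ Gs i) ∧ l.prod = g := by
  induction d with
  | zero =>
    intro j hj g hg
    have hg₀ : g ∈ derivedSeries G j := (Subgroup.closure_le _).mpr Set.inter_subset_right hg
    rw [add_zero] at hj
    rw [hj, Subgroup.mem_bot] at hg₀
    exact ⟨[], by simp, by simp, hg₀.symm⟩
  | succ d ih =>
    intro j hj g hg
    have := normal_closure_mixedValues w (N := fun _ => ⊤) (fun _ => inferInstance)
      (fun _ => derivedSeries_normal G j)
    have := normal_closure_wValues_inter w (derivedSeries G (j + 1))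
    obtain ⟨l₁, hl₁, hg₁⟩ := Subgroup.exists_ofFn_prod_inv_mul_mem_of_mem_closure
      (fun x hx y hy => commutator_mem_closure_mixedValues w hx.1 hy.2)
      (Set.inter_subset_left.trans hcov) hg
    obtain ⟨l₂, hl₂, hg₂⟩ := Subgroup.exists_ofFn_prod_inv_mul_mem_of_mem_closure
      (by
        rintro x hx _ ⟨f, -, ⟨i, hi⟩, rfl⟩
        exact commutator_mem_closure_wValues_inter w hx (eval_mem_of_mem w hi))
      (subset_trans (by rintro _ ⟨f, -, -, rfl⟩; exact ⟨f, rfl⟩) hcov) hg₁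
    obtain ⟨l₃, hlen, hl₃, hprod⟩ := ih (by rwa [← add_assoc, add_right_comm] at hj) _ hg₂
    refine ⟨List.ofFn l₁ ++ List.ofFn l₂ ++ l₃, by simp [hlen]; ring, ?_, ?_⟩
    · simp only [List.mem_append, List.mem_ofFn]
      rintro x ((⟨i, rfl⟩ | ⟨i, rfl⟩) | hx)
      exacts [⟨i, hl₁ i⟩, ⟨i, hl₂ i⟩, hl₃ x hx]
    · rw [List.prod_append, List.prod_append, hprod]
      group

end MCWord

/-- for every multilinear commutator word `w` and all positive `k, m`
there is a positive `r = r(k,m)` such that in any soluble group of derived length at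
most `k` whose `w`-values are covered by subgroups `G₁,…,G_m`, every element of
`w(G)` is a product of at most `r` elements from the subgroups `G₁,…,G_m`. -/
theorem statement7 (k m : ℕ) (hk : 0 < k) (hm : 0 < m) :
    ∃ r : ℕ, 0 < r ∧
      ∀ {kw : ℕ} (w : MCWord kw) (G : Type*) [Group G],
        derivedSeries G k = ⊥ →
        ∀ Gs : Fin m → Subgroup G, wValues w ⊆ ⋃ i, (Gs i : Set G) →
          ∀ g ∈ Subgroup.closure (wValues w),
            ∃ l : List G, l.length ≤ r ∧ (∀ x ∈ l, ∃ i, x ∈ Gs i) ∧ l.prod = g := by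
  refine ⟨2 * k * m, by positivity, fun w G _ hder Gs hcov g hg => ?_⟩
  have hg₀ : g ∈ Subgroup.closure (wValues w ∩ derivedSeries G 0) := by
    rwa [derivedSeries_zero, Subgroup.coe_top, Set.inter_univ]
  obtain ⟨l, hlen, hl, hprod⟩ :=
    w.exists_list_prod_eq_of_mem_closure_wValues_inter hcov k (by rwa [zero_add]) g hg₀
  exact ⟨l, hlen.le, hl, hprod⟩
end
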